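/- For the helically symmetric potentials A¹ = a₁ cos(z/k + a₂) + λ₁y, A² = a₁ sin(z/k + a₂), A³ = 0, Φ = λ₂ z/k (constants a₁, a₂, λ₁, λ₂, k with k ≠ 0), the vector field X₃ = x∂_y − y∂ₓ + k∂_z is a Lie point symmetry of the system ẍⁱ = Σⱼ ẋʲ(∂ⱼAⁱ − ∂ᵢAʲ) − ∂ᵢΦ, in the sense that the potentials satisfy the classifying equations: the directional derivative of Φ along the spatial flow of X₃ equals zero plus the inhomogeneity λ₂, i.e. (x∂_y − y∂ₓ + k∂_z)Φ = λ₂, and there exists a gauge function f with (x∂_y − y∂ₓ + k∂_z)Aⁱ = −εᵢⱼ₃ Aʲ + ∂ᵢf for i = 1,2,3. -/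

import Mathlib

/-! Every potential involved is a sum of functions of one coordinate each, so `X₃` acts on it
through one-variable derivatives. The helix `a₁ (cos, sin)(z/k + a₂)` is turned by `k ∂_z` exactly
as a rotation turns `(A¹, A²)`; the remaining term `λ₁ y` of `A¹` is not rotation covariant, and the
gauge `f = λ₁ (x² − y²) / 2` absorbs the defect, since `X₃(λ₁ y) = λ₁ x = ∂ₓ f` and `∂_y f = −λ₁ y`. -/

/-- Partial derivative `∂ⱼ f (p)`, via the one-variable derivative along the `j`-th axis. -/
noncomputable def pd (j : Fin 3) (f : (Fin 3 → ℝ) → ℝ) (p : Fin 3 → ℝ) : ℝ :=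
  deriv (fun s => f (Function.update p j s)) (p j)

/-- The spatial part of the screw-motion symmetry generator
`X₃ = x∂_y − y∂ₓ + k∂_z`, acting on scalar functions. -/
noncomputable def Xop (k : ℝ) (g : (Fin 3 → ℝ) → ℝ) (p : Fin 3 → ℝ) : ℝ :=
  p 0 * pd 1 g p - p 1 * pd 0 g p + k * pd 2 g p

def coordSum (g : Fin 3 → ℝ → ℝ) (p : Fin 3 → ℝ) : ℝ :=
  ∑ i, g i (p i)

theorem coordSum_apply (g : Fin 3 → ℝ → ℝ) (p : Fin 3 → ℝ) :
    coordSum g p = g 0 (p 0) + g 1 (p 1) + g 2 (p 2) := by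
  rw [coordSum, Fin.sum_univ_three]

theorem Differentiable.coordSum {g : Fin 3 → ℝ → ℝ} (hg : ∀ i, Differentiable ℝ (g i)) :
    Differentiable ℝ (coordSum g) := by
  unfold _root_.coordSum
  fun_prop

theorem pd_coordSum (g : Fin 3 → ℝ → ℝ) (j : Fin 3) (p : Fin 3 → ℝ) :
    pd j (coordSum g) p = deriv (g j) (p j) := by
  have hsplit : (fun s => coordSum g (Function.update p j s))
      = fun s => g j s + ∑ i ∈ Finset.univ.erase j, g i (p i) := by
    funext s
    rw [coordSum, ← Finset.add_sum_erase _ _ (Finset.mem_univ j)]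
    congr 1
    · simp
    · refine Finset.sum_congr rfl fun i hi => ?_
      rw [Function.update_of_ne (Finset.ne_of_mem_erase hi)]
  rw [pd, hsplit, deriv_add_const]

theorem Xop_coordSum (k : ℝ) (g : Fin 3 → ℝ → ℝ) (p : Fin 3 → ℝ) :
    Xop k (coordSum g) p
      = p 0 * deriv (g 1) (p 1) - p 1 * deriv (g 0) (p 0) + k * deriv (g 2) (p 2) := by
  simp only [Xop, pd_coordSum]

/-- For the helically symmetric potentials `A¹ = a₁cos(z/k + a₂) + λ₁y`,
`A² = a₁sin(z/k + a₂)`, `A³ = 0`, `Φ = λ₂z/k` (with `k ≠ 0`), the field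
`X₃ = x∂_y − y∂ₓ + k∂_z` satisfies the classifying equations: `X₃Φ = λ₂` and
there is a gauge function `f` with `X₃A¹ = −A² + ∂ₓf`, `X₃A² = A¹ + ∂_yf`,
`X₃A³ = ∂_zf`. -/
theorem stmt_15
    (a₁ a₂ lam₁ lam₂ k : ℝ) (hk : k ≠ 0)
    (A : Fin 3 → (Fin 3 → ℝ) → ℝ) (Φ : (Fin 3 → ℝ) → ℝ)
    (hA0 : ∀ p, A 0 p = a₁ * Real.cos (p 2 / k + a₂) + lam₁ * p 1)
    (hA1 : ∀ p, A 1 p = a₁ * Real.sin (p 2 / k + a₂))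
    (hA2 : ∀ p, A 2 p = 0)
    (hΦ : ∀ p, Φ p = lam₂ * p 2 / k) :
    (∀ p, Xop k Φ p = lam₂) ∧
    ∃ f : (Fin 3 → ℝ) → ℝ, Differentiable ℝ f ∧
      ∀ p, Xop k (A 0) p = -(A 1 p) + pd 0 f p ∧
           Xop k (A 1) p = A 0 p + pd 1 f p ∧
           Xop k (A 2) p = pd 2 f p := by
  have hΦ' : Φ = coordSum ![0, 0, fun z => lam₂ * z / k] := by
    funext p; simp [coordSum_apply, hΦ]
  have hA0' : A 0 = coordSum ![0, fun y => lam₁ * y, fun z => a₁ * Real.cos (z / k + a₂)] := by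
    funext p; simp [coordSum_apply, hA0, add_comm]
  have hA1' : A 1 = coordSum ![0, 0, fun z => a₁ * Real.sin (z / k + a₂)] := by
    funext p; simp [coordSum_apply, hA1]
  have hA2' : A 2 = coordSum 0 := by
    funext p; simp [coordSum_apply, hA2]
  set g : Fin 3 → ℝ → ℝ := ![fun x => lam₁ * x ^ 2 / 2, fun y => -(lam₁ * y ^ 2 / 2), 0]
  refine ⟨fun p => ?_, coordSum g, .coordSum fun i => ?_, fun p => ?_⟩
  · simp only [hΦ', Xop_coordSum, Matrix.cons_val_one, Matrix.cons_val_zero, Matrix.cons_val,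
      deriv_zero, Pi.zero_apply, mul_zero, sub_self, deriv_div_const, deriv_const_mul_id', zero_add]
    field_simp
  · fin_cases i <;> simp [g] <;> fun_prop
  · simp only [hA0', hA1', hA2', Xop_coordSum, pd_coordSum, coordSum_apply]
    refine ⟨?_, ?_, ?_⟩ <;> simp [g] <;> field_simp <;> ring
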